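/- arXiv:2510.23094 — 11 statements merged into one kernel-verified Lean document; each statement's English description precedes it below -/
import Mathlib

section
/- In a quasi-Boolean algebra, if x ≤ y (i.e., x∨y = y∨y), then y* ≤ x*. -/
/-- A quasi-Boolean algebra (QB-algebra). -/
class QB (Q : Type*) where
  vee : Q → Q → Q
  wedge : Q → Q → Q
  star : Q → Q
  zero : Q
  one : Q
  vee_comm : ∀ x y, vee x y = vee y x
  wedge_comm : ∀ x y, wedge x y = wedge y x
  vee_assoc : ∀ x y z, vee x (vee y z) = vee (vee x y) z
  wedge_assoc : ∀ x y z, wedge x (wedge y z) = wedge (wedge x y) z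
  absorb_vee : ∀ x y, vee x (wedge x y) = vee x x
  absorb_wedge : ∀ x y, wedge x (vee x y) = wedge x x
  vee_quasi : ∀ x y, vee x (vee y y) = vee x y
  wedge_quasi : ∀ x y, wedge x (wedge y y) = wedge x y
  vee_eq_wedge : ∀ x, vee x x = wedge x x
  distrib_vee : ∀ x y z, vee x (wedge y z) = wedge (vee x y) (vee x z)
  distrib_wedge : ∀ x y z, wedge x (vee y z) = vee (wedge x y) (wedge x z)
  vee_one : ∀ x, vee x one = one
  wedge_zero : ∀ x, wedge x zero = zero
  vee_star : ∀ x, vee x (star x) = one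
  wedge_star : ∀ x, wedge x (star x) = zero
  star_wedge_self : ∀ x, star (wedge x x) = vee (star x) (star x)
  star_star : ∀ x, star (star x) = x

open QB

/-- quasi-order: x ≤ y iff x ∨ y = y ∨ y -/
def QB.le {Q : Type*} [QB Q] (x y : Q) : Prop := vee x y = vee y y

/-- regular element -/
def QB.Reg {Q : Type*} [QB Q] (x : Q) : Prop := vee x x = x

namespace QBaux

variable {Q : Type*} [QB Q]

lemma one_wedge_one : wedge (one : Q) one = one := by
  rw [← vee_eq_wedge, vee_one]

lemma zero_vee_zero : vee (zero : Q) zero = zero := by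
  rw [vee_eq_wedge, wedge_zero]

/-- uniqueness of complements up to squaring -/
lemma compl_unique (a b c : Q) (hb1 : vee a b = one) (hb0 : wedge a b = zero)
    (hc1 : vee a c = one) (hc0 : wedge a c = zero) : vee b b = vee c c := by
  have key : ∀ u v : Q, vee a u = one → wedge a u = zero → vee a v = one →
      wedge u u = vee zero (wedge u v) := by
    intro u v hu1 hu0 hv1
    have h1 : wedge u one = wedge u u := by
      rw [← hu1, vee_comm a u, absorb_wedge]
    calc wedge u u = wedge u one := h1.symm
      _ = wedge u (vee a v) := by rw [hv1]
      _ = vee (wedge u a) (wedge u v) := distrib_wedge u a v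
      _ = vee zero (wedge u v) := by rw [wedge_comm u a, hu0]
  have hb := key b c hb1 hb0 hc1
  have hc := key c b hc1 hc0 hb1
  rw [vee_eq_wedge, vee_eq_wedge c, hb, hc, wedge_comm c b]

end QBaux

open QBaux in
theorem stmt2 {Q : Type*} [QB Q] (x y : Q) (h : QB.le x y) :
    QB.le (star y) (star x) := by
  unfold QB.le at h ⊢
  have haw : vee x y = wedge y y := by rw [h, vee_eq_wedge]
  -- y* is a complement of a := x ∨ y
  have hb1 : vee (vee x y) (star y) = one := by
    rw [haw, vee_comm, distrib_vee, vee_comm (star y) y, vee_star, one_wedge_one]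
  have hb0 : wedge (vee x y) (star y) = zero := by
    rw [haw, ← wedge_assoc, wedge_star, wedge_zero]
  -- x* ∧ y* is a complement of x ∨ y
  have hc1 : vee (vee x y) (wedge (star x) (star y)) = one := by
    have e1 : vee (vee x y) (star x) = one := by
      rw [vee_comm x y, ← vee_assoc, vee_star, vee_one]
    rw [distrib_vee, e1, hb1, one_wedge_one]
  have hc0 : wedge (vee x y) (wedge (star x) (star y)) = zero := by
    have e1 : wedge (wedge (star x) (star y)) x = zero := by
      rw [wedge_comm (star x) (star y), ← wedge_assoc, wedge_comm (star x) x,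
        wedge_star, wedge_zero]
    have e2 : wedge (wedge (star x) (star y)) y = zero := by
      rw [← wedge_assoc, wedge_comm (star y) y, wedge_star, wedge_zero]
    rw [wedge_comm, distrib_wedge, e1, e2, zero_vee_zero]
  have huniq : vee (star y) (star y) = vee (wedge (star x) (star y)) (wedge (star x) (star y)) :=
    compl_unique (vee x y) (star y) (wedge (star x) (star y)) hb1 hb0 hc1 hc0
  calc vee (star y) (star x) = vee (star x) (star y) := vee_comm _ _
    _ = vee (star x) (vee (star y) (star y)) := (vee_quasi _ _).symm
    _ = vee (star x) (vee (wedge (star x) (star y)) (wedge (star x) (star y))) := by rw [huniq]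
    _ = vee (star x) (wedge (star x) (star y)) := vee_quasi _ _
    _ = vee (star x) (star x) := absorb_vee _ _
end

section
/- In a quasi-Boolean algebra Q, the relation χ = {(x,y) : x ≤ y and y ≤ x} coincides with {(x,y) : x∨x = y∨y}, and χ is a congruence on Q (compatible with ∨, ∧, and *). -/
open QB

lemma QB.le_of_sq {Q : Type*} [QB Q] {x y : Q} (h : vee x x = vee y y) :
    QB.le x y := by
  unfold QB.le
  calc vee x y = vee x (vee y y) := (vee_quasi x y).symm
    _ = vee x (vee x x) := by rw [h]
    _ = vee x x := vee_quasi x x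
    _ = vee y y := h

lemma QB.chi_iff {Q : Type*} [QB Q] (x y : Q) :
    (QB.le x y ∧ QB.le y x) ↔ vee x x = vee y y := by
  constructor
  · rintro ⟨h1, h2⟩
    unfold QB.le at h1 h2
    rw [← h2, vee_comm, h1]
  · intro h
    exact ⟨QB.le_of_sq h, QB.le_of_sq h.symm⟩

lemma QB.sq_vee {Q : Type*} [QB Q] (x u : Q) :
    vee (vee x u) (vee x u) = vee (vee x x) (vee u u) := by
  rw [vee_assoc, ← vee_assoc x u x, vee_comm u x, vee_assoc, ← vee_assoc]

lemma QB.sq_wedge {Q : Type*} [QB Q] (x u : Q) :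
    vee (wedge x u) (wedge x u) = wedge (vee x x) (vee u u) := by
  rw [vee_eq_wedge, vee_eq_wedge x, vee_eq_wedge u,
    wedge_assoc, ← wedge_assoc x u x, wedge_comm u x, wedge_assoc, ← wedge_assoc]

theorem stmt3 {Q : Type*} [QB Q] :
    (∀ x y : Q, (QB.le x y ∧ QB.le y x) ↔ vee x x = vee y y) ∧
    Equivalence (fun x y : Q => QB.le x y ∧ QB.le y x) ∧
    (∀ x y u v : Q, (QB.le x y ∧ QB.le y x) → (QB.le u v ∧ QB.le v u) →
      (QB.le (vee x u) (vee y v) ∧ QB.le (vee y v) (vee x u))) ∧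
    (∀ x y u v : Q, (QB.le x y ∧ QB.le y x) → (QB.le u v ∧ QB.le v u) →
      (QB.le (wedge x u) (wedge y v) ∧ QB.le (wedge y v) (wedge x u))) ∧
    (∀ x y : Q, (QB.le x y ∧ QB.le y x) →
      (QB.le (star x) (star y) ∧ QB.le (star y) (star x))) := by
  refine ⟨QB.chi_iff, ⟨fun x => ⟨QB.le_of_sq rfl, QB.le_of_sq rfl⟩,
    fun h => ⟨h.2, h.1⟩,
    fun h1 h2 => (QB.chi_iff _ _).mpr (((QB.chi_iff _ _).mp h1).trans ((QB.chi_iff _ _).mp h2))⟩,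
    ?_, ?_, ?_⟩
  · intro x y u v h1 h2
    rw [QB.chi_iff] at h1 h2 ⊢
    rw [QB.sq_vee, QB.sq_vee, h1, h2]
  · intro x y u v h1 h2
    rw [QB.chi_iff] at h1 h2 ⊢
    rw [QB.sq_wedge, QB.sq_wedge, h1, h2]
  · intro x y h
    rw [QB.chi_iff] at h ⊢
    rw [← star_wedge_self, ← star_wedge_self, ← vee_eq_wedge, ← vee_eq_wedge, h]
end

section
/- In a quasi-Boolean algebra Q, the relation τ = {(x,y) : x = y or both x and y are regular} is a congruence on Q, where x is regular iff x∨x = x. -/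
open QB

lemma reg_vee {Q : Type*} [QB Q] (x u : Q) (hx : QB.Reg x) : QB.Reg (vee x u) := by
  unfold QB.Reg at *
  calc vee (vee x u) (vee x u) = vee x (vee u (vee x u)) := by simp only [vee_assoc]
    _ = vee x (vee (vee x u) u) := by rw [vee_comm u]
    _ = vee x (vee x (vee u u)) := by simp only [vee_assoc]
    _ = vee (vee x x) (vee u u) := by simp only [vee_assoc]
    _ = vee x (vee u u) := by rw [hx]
    _ = vee x u := vee_quasi x u

lemma reg_wedge {Q : Type*} [QB Q] (x u : Q) (hx : QB.Reg x) : QB.Reg (wedge x u) := by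
  unfold QB.Reg at *
  have hw : wedge x x = x := by rw [← vee_eq_wedge, hx]
  rw [vee_eq_wedge]
  calc wedge (wedge x u) (wedge x u) = wedge x (wedge u (wedge x u)) := by simp only [wedge_assoc]
    _ = wedge x (wedge (wedge x u) u) := by rw [wedge_comm u]
    _ = wedge x (wedge x (wedge u u)) := by simp only [wedge_assoc]
    _ = wedge (wedge x x) (wedge u u) := by simp only [wedge_assoc]
    _ = wedge x (wedge u u) := by rw [hw]
    _ = wedge x u := wedge_quasi x u

lemma reg_star {Q : Type*} [QB Q] (x : Q) (hx : QB.Reg x) : QB.Reg (star x) := by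
  unfold QB.Reg at *
  have hw : wedge x x = x := by rw [← vee_eq_wedge, hx]
  rw [← star_wedge_self, hw]

theorem stmt4 {Q : Type*} [QB Q] :
    Equivalence (fun x y : Q => x = y ∨ (QB.Reg x ∧ QB.Reg y)) ∧
    (∀ x y u v : Q, (x = y ∨ (QB.Reg x ∧ QB.Reg y)) → (u = v ∨ (QB.Reg u ∧ QB.Reg v)) →
      (vee x u = vee y v ∨ (QB.Reg (vee x u) ∧ QB.Reg (vee y v)))) ∧
    (∀ x y u v : Q, (x = y ∨ (QB.Reg x ∧ QB.Reg y)) → (u = v ∨ (QB.Reg u ∧ QB.Reg v)) →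
      (wedge x u = wedge y v ∨ (QB.Reg (wedge x u) ∧ QB.Reg (wedge y v)))) ∧
    (∀ x y : Q, (x = y ∨ (QB.Reg x ∧ QB.Reg y)) →
      (star x = star y ∨ (QB.Reg (star x) ∧ QB.Reg (star y)))) := by
  refine ⟨⟨fun x => Or.inl rfl, ?_, ?_⟩, ?_, ?_, ?_⟩
  · rintro x y (rfl | ⟨h1, h2⟩)
    · exact Or.inl rfl
    · exact Or.inr ⟨h2, h1⟩
  · rintro x y z (rfl | ⟨h1, h2⟩) (rfl | ⟨h3, h4⟩)
    · exact Or.inl rfl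
    · exact Or.inr ⟨h3, h4⟩
    · exact Or.inr ⟨h1, h2⟩
    · exact Or.inr ⟨h1, h4⟩
  · rintro x y u v (rfl | ⟨h1, h2⟩) (rfl | ⟨h3, h4⟩)
    · exact Or.inl rfl
    · exact Or.inr ⟨by rw [vee_comm]; exact reg_vee u x h3, by rw [vee_comm]; exact reg_vee v x h4⟩
    · exact Or.inr ⟨reg_vee x u h1, reg_vee y u h2⟩
    · exact Or.inr ⟨reg_vee x u h1, reg_vee y v h2⟩
  · rintro x y u v (rfl | ⟨h1, h2⟩) (rfl | ⟨h3, h4⟩)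
    · exact Or.inl rfl
    · exact Or.inr ⟨by rw [wedge_comm]; exact reg_wedge u x h3, by rw [wedge_comm]; exact reg_wedge v x h4⟩
    · exact Or.inr ⟨reg_wedge x u h1, reg_wedge y u h2⟩
    · exact Or.inr ⟨reg_wedge x u h1, reg_wedge y v h2⟩
  · rintro x y (rfl | ⟨h1, h2⟩)
    · exact Or.inl rfl
    · exact Or.inr ⟨reg_star x h1, reg_star y h2⟩
end

section
/- In a quasi-Boolean algebra Q, every χ-equivalence class contains exactly one regular element, namely the class of x contains x∨x and no other regular element. -/
open QB

theorem stmt6 {Q : Type*} [QB Q] (x : Q) :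
    QB.Reg (vee x x) ∧ vee x x = vee (vee x x) (vee x x) ∧
    (∀ y : Q, vee x x = vee y y → QB.Reg y → y = vee x x) := by
  have h : vee (vee x x) (vee x x) = vee x x := by
    rw [vee_quasi, vee_comm, vee_quasi]
  exact ⟨h, h.symm, fun y hxy hy => by rw [← (hy : vee y y = y), ← hxy]⟩
end

section
/- Let Q be a quasi-Boolean algebra and x a regular element. If y and y* both lie in the cloud of x (i.e., y∨y = x and y*∨y* = x), then x = x*. -/
open QB

theorem stmt7 {Q : Type*} [QB Q] (x y : Q) (hx : QB.Reg x)
    (hy : vee y y = x) (hys : vee (star y) (star y) = x) :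
    x = star x := by
  calc x = vee (star y) (star y) := hys.symm
    _ = star (wedge y y) := (star_wedge_self y).symm
    _ = star (vee y y) := by rw [vee_eq_wedge]
    _ = star x := by rw [hy]
end

section
/- Let Q be a quasi-Boolean algebra and x a regular element. Then the image of the cloud of x under * equals the cloud of x*: {y* : y∨y = x∨x} = {z : z∨z = x*∨x*}. -/
open QB

lemma QB.star_vee_self {Q : Type*} [QB Q] (y : Q) :
    star (vee y y) = vee (star y) (star y) := by
  rw [vee_eq_wedge, star_wedge_self]

theorem stmt8 {Q : Type*} [QB Q] (x : Q) (hx : QB.Reg x) :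
    {z : Q | ∃ y : Q, vee y y = vee x x ∧ z = star y} =
      {z : Q | vee z z = vee (star x) (star x)} := by
  ext z
  simp only [Set.mem_setOf_eq]
  constructor
  · rintro ⟨y, hy, rfl⟩
    rw [← QB.star_vee_self, hy, QB.star_vee_self]
  · intro hz
    refine ⟨star z, ?_, (QB.star_star z).symm⟩
    rw [← QB.star_vee_self, hz, QB.star_vee_self, QB.star_star]
end

section
/- Let Q be a quasi-Boolean algebra and x a regular element. The map y ↦ y* is a bijection from the cloud of x onto the cloud of x*. -/
open QB

theorem stmt9 {Q : Type*} [QB Q] (x : Q) (hx : QB.Reg x) :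
    Set.BijOn (star : Q → Q) {y : Q | vee y y = x} {z : Q | vee z z = star x} := by
  have key : ∀ y : Q, vee (star y) (star y) = star (vee y y) := by
    intro y; rw [vee_eq_wedge y, star_wedge_self]
  refine ⟨?_, ?_, ?_⟩
  · intro y hy
    simp only [Set.mem_setOf_eq] at hy ⊢
    rw [key, hy]
  · intro a _ b _ h
    have := congrArg QB.star h
    rwa [QB.star_star, QB.star_star] at this
  · intro z hz
    simp only [Set.mem_setOf_eq] at hz
    refine ⟨star z, ?_, QB.star_star z⟩
    simp only [Set.mem_setOf_eq]
    rw [key, hz, QB.star_star]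
end

section
/- Let Q be a finite non-flat quasi-Boolean algebra (1 ≠ 0). Then the cardinality of Q is even. -/
open QB

theorem stmt12 {Q : Type*} [QB Q] [Fintype Q] (h : (one : Q) ≠ zero) :
    Even (Fintype.card Q) := by
  classical
  have hp : Fact (Nat.Prime 2) := ⟨Nat.prime_two⟩
  let f : Function.End Q := star
  have hf2 : f ^ 2 ^ 1 = 1 := by
    funext x
    show star (star x) = x
    exact star_star x
  have hmod := Equiv.Perm.card_fixedPoints_modEq (α := Q) (p := 2) (n := 1) hf2
  have hempty : Fintype.card f.fixedPoints = 0 := by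
    rw [Fintype.card_eq_zero_iff]
    constructor
    rintro ⟨x, hx⟩
    have hx' : star x = x := hx
    apply h
    have h1 : vee x x = one := by rw [← vee_star x, hx']
    have h0 : wedge x x = zero := by rw [← wedge_star x, hx']
    rw [← h1, vee_eq_wedge, h0]
  rw [hempty] at hmod
  rw [Nat.even_iff]; simpa [Nat.ModEq] using hmod
end

section
/- Let F be a flat quasi-Boolean algebra (1 = 0), F₀ a subalgebra, and θ a congruence on F₀. Then θ' = θ ∪ Δ_F (the diagonal of F) is a congruence on F with θ = θ' ∩ (F₀ × F₀). Hence the class of flat QB-algebras has the congruence extension property. -/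
open QB

section Aux
variable {Q : Type*} [QB Q]

lemma vee_self_reg (x : Q) : vee (vee x x) (vee x x) = vee x x := by
  rw [vee_quasi, ← vee_assoc, vee_quasi]

lemma reg_eq_one (hflat : (one : Q) = zero) (a : Q) (ha : vee a a = a) : a = one := by
  have h1 : wedge a one = a := by
    have := absorb_wedge a (star a)
    rw [vee_star] at this
    rw [this, ← vee_eq_wedge, ha]
  have h2 : vee a (wedge a (star a)) = wedge (vee a a) (vee a (star a)) := distrib_vee a a (star a)
  rw [wedge_star, ha, vee_star, h1] at h2
  -- h2 : vee a zero = a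
  have h3 : vee a zero = one := by rw [← hflat]; exact vee_one a
  rw [h3] at h2
  exact h2.symm

lemma vee_self_one (hflat : (one : Q) = zero) (x : Q) : vee x x = one :=
  reg_eq_one hflat _ (vee_self_reg x)

lemma vee_eq_one (hflat : (one : Q) = zero) (x y : Q) : vee x y = one := by
  rw [← vee_quasi x y, vee_self_one hflat, vee_one]

lemma wedge_eq_one (hflat : (one : Q) = zero) (x y : Q) : wedge x y = one := by
  rw [← wedge_quasi x y, ← vee_eq_wedge, vee_self_one hflat, hflat, wedge_zero]

end Aux

theorem stmt15 {Q : Type*} [QB Q] (hflat : (one : Q) = zero)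
    (S : Set Q) (hS0 : (zero : Q) ∈ S) (hS1 : (one : Q) ∈ S)
    (hSv : ∀ x ∈ S, ∀ y ∈ S, vee x y ∈ S)
    (hSw : ∀ x ∈ S, ∀ y ∈ S, wedge x y ∈ S)
    (hSs : ∀ x ∈ S, star x ∈ S)
    (θ : Q → Q → Prop)
    (hdom : ∀ x y, θ x y → x ∈ S ∧ y ∈ S)
    (hrefl : ∀ x ∈ S, θ x x)
    (hsymm : ∀ x y, θ x y → θ y x)
    (htrans : ∀ x y z, θ x y → θ y z → θ x z)
    (hv : ∀ x y u v, θ x y → θ u v → θ (vee x u) (vee y v))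
    (hw : ∀ x y u v, θ x y → θ u v → θ (wedge x u) (wedge y v))
    (hs : ∀ x y, θ x y → θ (star x) (star y)) :
    Equivalence (fun x y : Q => θ x y ∨ x = y) ∧
    (∀ x y u v : Q, (θ x y ∨ x = y) → (θ u v ∨ u = v) →
      (θ (vee x u) (vee y v) ∨ vee x u = vee y v)) ∧
    (∀ x y u v : Q, (θ x y ∨ x = y) → (θ u v ∨ u = v) →
      (θ (wedge x u) (wedge y v) ∨ wedge x u = wedge y v)) ∧
    (∀ x y : Q, (θ x y ∨ x = y) → (θ (star x) (star y) ∨ star x = star y)) ∧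
    (∀ x y : Q, θ x y ↔ ((θ x y ∨ x = y) ∧ x ∈ S ∧ y ∈ S)) := by
  refine ⟨⟨fun x => Or.inr rfl, ?_, ?_⟩, ?_, ?_, ?_, ?_⟩
  · rintro x y (h | rfl)
    · exact Or.inl (hsymm _ _ h)
    · exact Or.inr rfl
  · rintro x y z (h | rfl) (h2 | rfl)
    · exact Or.inl (htrans _ _ _ h h2)
    · exact Or.inl h
    · exact Or.inl h2
    · exact Or.inr rfl
  · intro x y u v _ _
    exact Or.inr (by rw [vee_eq_one hflat, vee_eq_one hflat])
  · intro x y u v _ _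
    exact Or.inr (by rw [wedge_eq_one hflat, wedge_eq_one hflat])
  · rintro x y (h | rfl)
    · exact Or.inl (hs _ _ h)
    · exact Or.inr rfl
  · intro x y
    constructor
    · intro h
      exact ⟨Or.inl h, hdom _ _ h⟩
    · rintro ⟨h | rfl, hx, hy⟩
      · exact h
      · exact hrefl _ hx
end

section
/- Let Q be a non-flat quasi-Boolean algebra, θ a congruence on the Boolean subalgebra R(Q) of regular elements, x an irregular element, and y an irregular element with y∨y = x∨x, y ≠ x. Then θ ∪ Δ ∪ {(x,y),(y,x),(x*,y*),(y*,x*)} is a congruence on Q. -/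
open QB

section Aux
variable {Q : Type*} [QB Q]

lemma qb_vee_self_eq (u v : Q) : vee u v = vee (vee u u) (vee v v) := by
  rw [vee_quasi, vee_comm (vee u u) v, vee_quasi, vee_comm]

lemma qb_vee_absorb (u v : Q) : vee v (vee u v) = vee u v :=
  calc vee v (vee u v) = vee v (vee v u) := by rw [vee_comm u v]
    _ = vee (vee v v) u := vee_assoc ..
    _ = vee u (vee v v) := vee_comm ..
    _ = vee u v := vee_quasi ..

lemma qb_reg_vee (u v : Q) : vee (vee u v) (vee u v) = vee u v :=
  calc vee (vee u v) (vee u v) = vee u (vee v (vee u v)) := (vee_assoc ..).symm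
    _ = vee u (vee u v) := by rw [qb_vee_absorb]
    _ = vee (vee u u) v := vee_assoc ..
    _ = vee v (vee u u) := vee_comm ..
    _ = vee v u := vee_quasi ..
    _ = vee u v := vee_comm ..

lemma qb_wedge_self_eq (u v : Q) : wedge u v = wedge (vee u u) (vee v v) := by
  rw [vee_eq_wedge, vee_eq_wedge, wedge_quasi, wedge_comm (wedge u u) v,
    wedge_quasi, wedge_comm]

lemma qb_star_irreg {u : Q} (h : ¬ QB.Reg u) : ¬ QB.Reg (QB.star u) := by
  intro hr
  apply h
  have h1 : QB.star (wedge u u) = QB.star u := by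
    rw [star_wedge_self]; exact hr
  have h2 := congrArg QB.star h1
  rw [QB.star_star, QB.star_star] at h2
  show vee u u = u
  rw [vee_eq_wedge]; exact h2

lemma qb_ne_star_self (hnf : (one : Q) ≠ zero) (u : Q) : u ≠ QB.star u := by
  intro h
  apply hnf
  have h1 : vee u u = one := by nth_rewrite 2 [h]; exact vee_star u
  have h2 : wedge u u = zero := by nth_rewrite 2 [h]; exact wedge_star u
  rw [← h1, vee_eq_wedge, h2]

end Aux

theorem stmt17 {Q : Type*} [QB Q] (hnf : (one : Q) ≠ zero)
    (θ : Q → Q → Prop)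
    (hdom : ∀ a b, θ a b → QB.Reg a ∧ QB.Reg b)
    (hrefl : ∀ a : Q, QB.Reg a → θ a a)
    (hsymm : ∀ a b, θ a b → θ b a)
    (htrans : ∀ a b c, θ a b → θ b c → θ a c)
    (hv : ∀ a b c d, θ a b → θ c d → θ (vee a c) (vee b d))
    (hw : ∀ a b c d, θ a b → θ c d → θ (wedge a c) (wedge b d))
    (hs : ∀ a b, θ a b → θ (star a) (star b))
    (x y : Q) (hx : ¬ QB.Reg x) (hy : ¬ QB.Reg y)
    (hcl : vee y y = vee x x) (hne : y ≠ x) :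
    let ρ : Q → Q → Prop := fun a b => θ a b ∨ a = b ∨
      (a = x ∧ b = y) ∨ (a = y ∧ b = x) ∨
      (a = star x ∧ b = star y) ∨ (a = star y ∧ b = star x)
    Equivalence ρ ∧
    (∀ a b c d : Q, ρ a b → ρ c d → ρ (vee a c) (vee b d)) ∧
    (∀ a b c d : Q, ρ a b → ρ c d → ρ (wedge a c) (wedge b d)) ∧
    (∀ a b : Q, ρ a b → ρ (star a) (star b)) := by
  intro ρ
  have hsx : ¬ QB.Reg (QB.star x) := qb_star_irreg hx
  have hsy : ¬ QB.Reg (QB.star y) := qb_star_irreg hy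
  have hscl : vee (QB.star y) (QB.star y) = vee (QB.star x) (QB.star x) := by
    rw [← star_wedge_self, ← star_wedge_self, ← vee_eq_wedge, ← vee_eq_wedge, hcl]
  have hnss : QB.star y ≠ QB.star x := fun h =>
    hne (by rw [← QB.star_star y, h, QB.star_star])
  have key : ∀ a b, ρ a b → θ (vee a a) (vee b b) := by
    intro a b h
    rcases h with h | h | ⟨h1, h2⟩ | ⟨h1, h2⟩ | ⟨h1, h2⟩ | ⟨h1, h2⟩
    · exact hv _ _ _ _ h h
    · rw [h]; exact hrefl _ (qb_reg_vee b b)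
    · rw [h1, h2, hcl]; exact hrefl _ (qb_reg_vee x x)
    · rw [h1, h2, hcl]; exact hrefl _ (qb_reg_vee x x)
    · rw [h1, h2, hscl]; exact hrefl _ (qb_reg_vee (QB.star x) (QB.star x))
    · rw [h1, h2, hscl]; exact hrefl _ (qb_reg_vee (QB.star x) (QB.star x))
  refine ⟨⟨fun a => Or.inr (Or.inl rfl), ?_, ?_⟩, ?_, ?_, ?_⟩
  · -- symm
    rintro a b (h | h | ⟨h1, h2⟩ | ⟨h1, h2⟩ | ⟨h1, h2⟩ | ⟨h1, h2⟩)
    · exact Or.inl (hsymm _ _ h)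
    · exact Or.inr (Or.inl h.symm)
    · exact Or.inr (Or.inr (Or.inr (Or.inl ⟨h2, h1⟩)))
    · exact Or.inr (Or.inr (Or.inl ⟨h2, h1⟩))
    · exact Or.inr (Or.inr (Or.inr (Or.inr (Or.inr ⟨h2, h1⟩))))
    · exact Or.inr (Or.inr (Or.inr (Or.inr (Or.inl ⟨h2, h1⟩))))
  · -- trans
    rintro a b c hab hbc
    rcases hab with h1 | h1 | ⟨h1, h2⟩ | ⟨h1, h2⟩ | ⟨h1, h2⟩ | ⟨h1, h2⟩
    · -- θ a b
      rcases hbc with g | g | ⟨g1, g2⟩ | ⟨g1, g2⟩ | ⟨g1, g2⟩ | ⟨g1, g2⟩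
      · exact Or.inl (htrans _ _ _ h1 g)
      · exact Or.inl (g ▸ h1)
      · exact absurd (g1 ▸ (hdom _ _ h1).2) hx
      · exact absurd (g1 ▸ (hdom _ _ h1).2) hy
      · exact absurd (g1 ▸ (hdom _ _ h1).2) hsx
      · exact absurd (g1 ▸ (hdom _ _ h1).2) hsy
    · -- a = b
      rw [h1]; exact hbc
    · -- a = x, b = y
      rcases hbc with g | g | ⟨g1, g2⟩ | ⟨g1, g2⟩ | ⟨g1, g2⟩ | ⟨g1, g2⟩
      · exact absurd (h2 ▸ (hdom _ _ g).1) hy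
      · exact Or.inr (Or.inr (Or.inl ⟨h1, g ▸ h2⟩))
      · exact absurd (h2.symm.trans g1) hne
      · exact Or.inr (Or.inl (h1.trans g2.symm))
      · have hk : c = x := by rw [g2, (h2.symm.trans g1), QB.star_star]
        exact Or.inr (Or.inl (h1.trans hk.symm))
      · exact absurd (h2.symm.trans g1) (qb_ne_star_self hnf y)
    · -- a = y, b = x
      rcases hbc with g | g | ⟨g1, g2⟩ | ⟨g1, g2⟩ | ⟨g1, g2⟩ | ⟨g1, g2⟩
      · exact absurd (h2 ▸ (hdom _ _ g).1) hx
      · exact Or.inr (Or.inr (Or.inr (Or.inl ⟨h1, g ▸ h2⟩)))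
      · exact Or.inr (Or.inl (h1.trans g2.symm))
      · exact absurd (h2.symm.trans g1).symm hne
      · exact absurd (h2.symm.trans g1) (qb_ne_star_self hnf x)
      · have hk : c = y := by rw [g2, (h2.symm.trans g1), QB.star_star]
        exact Or.inr (Or.inl (h1.trans hk.symm))
    · -- a = star x, b = star y
      rcases hbc with g | g | ⟨g1, g2⟩ | ⟨g1, g2⟩ | ⟨g1, g2⟩ | ⟨g1, g2⟩
      · exact absurd (h2 ▸ (hdom _ _ g).1) hsy
      · exact Or.inr (Or.inr (Or.inr (Or.inr (Or.inl ⟨h1, g ▸ h2⟩))))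
      · have hk : y = QB.star x := by rw [← (h2.symm.trans g1), QB.star_star]
        exact Or.inr (Or.inl ((h1.trans hk.symm).trans g2.symm))
      · exact absurd (h2.symm.trans g1).symm (qb_ne_star_self hnf y)
      · exact absurd (h2.symm.trans g1) hnss
      · exact Or.inr (Or.inl (h1.trans g2.symm))
    · -- a = star y, b = star x
      rcases hbc with g | g | ⟨g1, g2⟩ | ⟨g1, g2⟩ | ⟨g1, g2⟩ | ⟨g1, g2⟩
      · exact absurd (h2 ▸ (hdom _ _ g).1) hsx
      · exact Or.inr (Or.inr (Or.inr (Or.inr (Or.inr ⟨h1, g ▸ h2⟩))))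
      · exact absurd (h2.symm.trans g1).symm (qb_ne_star_self hnf x)
      · have hk : x = QB.star y := by rw [← (h2.symm.trans g1), QB.star_star]
        exact Or.inr (Or.inl ((h1.trans hk.symm).trans g2.symm))
      · exact Or.inr (Or.inl (h1.trans g2.symm))
      · exact absurd (h2.symm.trans g1) hnss.symm
  · -- vee compatible
    intro a b c d hab hcd
    have h := hv _ _ _ _ (key a b hab) (key c d hcd)
    rw [← qb_vee_self_eq, ← qb_vee_self_eq] at h
    exact Or.inl h
  · -- wedge compatible
    intro a b c d hab hcd
    have h := hw _ _ _ _ (key a b hab) (key c d hcd)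
    rw [← qb_wedge_self_eq, ← qb_wedge_self_eq] at h
    exact Or.inl h
  · -- star compatible
    rintro a b (h | h | ⟨h1, h2⟩ | ⟨h1, h2⟩ | ⟨h1, h2⟩ | ⟨h1, h2⟩)
    · exact Or.inl (hs _ _ h)
    · exact Or.inr (Or.inl (by rw [h]))
    · exact Or.inr (Or.inr (Or.inr (Or.inr (Or.inl ⟨by rw [h1], by rw [h2]⟩))))
    · exact Or.inr (Or.inr (Or.inr (Or.inr (Or.inr ⟨by rw [h1], by rw [h2]⟩))))
    · exact Or.inr (Or.inr (Or.inl ⟨by rw [h1, QB.star_star], by rw [h2, QB.star_star]⟩))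
    · exact Or.inr (Or.inr (Or.inr (Or.inl ⟨by rw [h1, QB.star_star], by rw [h2, QB.star_star]⟩)))
end

section
/- Let Q be a flat quasi-Boolean algebra (1 = 0) and x, y distinct elements with x ≠ 0, y ≠ 0, x* = x, and y* = y. Then Δ ∪ {(x,y),(y,x)} is a congruence on Q. -/
open QB

theorem stmt18 {Q : Type*} [QB Q] (hflat : (one : Q) = zero)
    (x y : Q) (hxy : x ≠ y) (hx0 : x ≠ zero) (hy0 : y ≠ zero)
    (hxs : star x = x) (hys : star y = y) :
    let ρ : Q → Q → Prop := fun a b => a = b ∨ (a = x ∧ b = y) ∨ (a = y ∧ b = x)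
    Equivalence ρ ∧
    (∀ a b c d : Q, ρ a b → ρ c d → ρ (vee a c) (vee b d)) ∧
    (∀ a b c d : Q, ρ a b → ρ c d → ρ (wedge a c) (wedge b d)) ∧
    (∀ a b : Q, ρ a b → ρ (star a) (star b)) := by
  intro ρ
  have hvz : ∀ a : Q, vee a zero = zero := fun a => hflat ▸ vee_one a
  have hvx : ∀ a : Q, vee a a = zero := fun a => by
    have := absorb_vee a zero
    rw [wedge_zero, hvz] at this; exact this.symm
  have hv : ∀ a b : Q, vee a b = zero := fun a b => by
    have := vee_quasi a b
    rw [hvx, hvz] at this; exact this.symm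
  have hw : ∀ a b : Q, wedge a b = zero := fun a b => by
    have := wedge_quasi a b
    rw [← vee_eq_wedge, hvx, wedge_zero] at this; exact this.symm
  refine ⟨⟨fun a => Or.inl rfl, ?_, ?_⟩, ?_, ?_, ?_⟩
  · rintro a b (rfl | ⟨rfl, rfl⟩ | ⟨rfl, rfl⟩)
    · exact Or.inl rfl
    · exact Or.inr (Or.inr ⟨rfl, rfl⟩)
    · exact Or.inr (Or.inl ⟨rfl, rfl⟩)
  · rintro a b c (rfl | ⟨rfl, rfl⟩ | ⟨rfl, rfl⟩) h <;>
      rcases h with rfl | ⟨h1, h2⟩ | ⟨h1, h2⟩ <;> subst_vars <;> tauto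
  · intro a b c d _ _; exact Or.inl (by rw [hv, hv])
  · intro a b c d _ _; exact Or.inl (by rw [hw, hw])
  · rintro a b (rfl | ⟨rfl, rfl⟩ | ⟨rfl, rfl⟩)
    · exact Or.inl rfl
    · rw [hxs, hys]; exact Or.inr (Or.inl ⟨rfl, rfl⟩)
    · rw [hxs, hys]; exact Or.inr (Or.inr ⟨rfl, rfl⟩)
end
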